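/- arXiv:math/0610971 — 2 statements merged into one kernel-verified Lean document; each statement's English description precedes it below -/
import Mathlib

section
/- Let A be an algebra, e ∈ A idempotent, and suppose f, g ∈ eAe with fgf = f. Let S = eAef, a left ideal of eAe. Then the multiplication map μ: Ae ⊗_{eAe} S → Af, ae ⊗ s ↦ aes, is an isomorphism of left A-modules, with inverse ν(x) = x ⊗ gf. -/
/-!
Since `fgf = f`, the element `u = gf ∈ S` is a right identity for `S`, and every `s ∈ S` lies in
`eAe`. Balancing `s` across the tensor sign gives `a ⊗ s = a ⊗ s·u = as ⊗ u`, so every element of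
`Ae ⊗_{eAe} S` has the form `x ⊗ u` with `x = μ(x ⊗ u)`. Hence `μ` is injective with inverse
`x ↦ x ⊗ u`, and its image is `Ae·gf = Af`.
-/

open TensorProduct

section Setup

variable (k A : Type) [Field k] [Ring A] [Algebra k A]

/-- The corner `eAe = {x | e * x * e = x}` as a `k`-submodule of `A`. -/
def cornerSub (e : A) : Submodule k A where
  carrier := {x : A | e * x * e = x}
  add_mem' := by
    intro a b ha hb
    simp only [Set.mem_setOf_eq] at *
    rw [mul_add, add_mul, ha, hb]
  zero_mem' := by simp
  smul_mem' := by
    intro c x hx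
    simp only [Set.mem_setOf_eq] at *
    rw [mul_smul_comm, smul_mul_assoc, hx]

/-- The right ideal `Ae = {x | x * e = x}` as a `k`-submodule of `A`. -/
def aeSub (e : A) : Submodule k A where
  carrier := {x : A | x * e = x}
  add_mem' := by
    intro a b ha hb
    simp only [Set.mem_setOf_eq] at *
    rw [add_mul, ha, hb]
  zero_mem' := by simp
  smul_mem' := by
    intro c x hx
    simp only [Set.mem_setOf_eq] at *
    rw [smul_mul_assoc, hx]

/-- The balancing relations defining `Ae ⊗_{eAe} S` as a quotient of `Ae ⊗[k] S`. -/
def balRel (e : A) (S : Submodule k A) : Submodule k (aeSub k A e ⊗[k] S) :=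
  Submodule.span k {t : aeSub k A e ⊗[k] S |
    ∃ (a ab : aeSub k A e) (b : cornerSub k A e) (s bs : S),
      (ab : A) = (a : A) * (b : A) ∧ (bs : A) = (b : A) * (s : A) ∧
      t = ab ⊗ₜ[k] s - a ⊗ₜ[k] bs}

/-- The globalisation `G(S) = Ae ⊗_{eAe} S`. -/
abbrev Glob (e : A) (S : Submodule k A) : Type :=
  @HasQuotient.Quotient (aeSub k A e ⊗[k] S) (Submodule k (aeSub k A e ⊗[k] S))
    (@Submodule.hasQuotient k (aeSub k A e ⊗[k] S) _ TensorProduct.addCommGroup _) (balRel k A e S)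

/-- Left multiplication by `a' ∈ A` on `Ae`. -/
noncomputable def lmulAe (e a' : A) : aeSub k A e →ₗ[k] aeSub k A e :=
  (LinearMap.mulLeft k a').restrict (p := aeSub k A e) (q := aeSub k A e) (by
    intro x hx
    have hx' : (x : A) * e = x := hx
    simp only [LinearMap.mulLeft_apply]
    show (a' * x) * e = a' * x
    rw [mul_assoc, hx'])

end Setup

section Globalisation

variable {k A : Type} [Field k] [Ring A] [Algebra k A] {e : A}

theorem mem_cornerSub {x : A} : x ∈ cornerSub k A e ↔ e * x * e = x := Iff.rfl

theorem mem_aeSub {x : A} : x ∈ aeSub k A e ↔ x * e = x := Iff.rfl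

theorem IsIdempotentElem.mul_eq_self_of_mem_cornerSub (he : IsIdempotentElem e) {x : A}
    (hx : x ∈ cornerSub k A e) : e * x = x := by
  rw [mem_cornerSub] at hx
  rw [← hx, ← mul_assoc, ← mul_assoc, he.eq]

theorem IsIdempotentElem.cornerSub_le_aeSub (he : IsIdempotentElem e) :
    cornerSub k A e ≤ aeSub k A e := by
  intro x hx
  rw [mem_cornerSub] at hx
  rw [mem_aeSub, ← hx, mul_assoc, he.eq]

theorem IsIdempotentElem.mul_mem_cornerSub (he : IsIdempotentElem e) {b c : A}
    (hb : b ∈ cornerSub k A e) (hc : c ∈ cornerSub k A e) : b * c ∈ cornerSub k A e := by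
  have hc' : c * e = c := he.cornerSub_le_aeSub hc
  rw [mem_cornerSub, ← mul_assoc, he.mul_eq_self_of_mem_cornerSub hb, mul_assoc, hc']

theorem mul_mem_aeSub (a : A) {x : A} (hx : x ∈ aeSub k A e) : a * x ∈ aeSub k A e := by
  rw [mem_aeSub, mul_assoc, hx]

namespace Glob

theorem mk_mul_tmul {S : Submodule k A} (a ab : aeSub k A e) (b : cornerSub k A e) (s bs : S)
    (hab : (ab : A) = a * b) (hbs : (bs : A) = b * s) :
    (Submodule.Quotient.mk (ab ⊗ₜ[k] s) : Glob k A e S) = Submodule.Quotient.mk (a ⊗ₜ[k] bs) :=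
  (Submodule.Quotient.eq _).2 (Submodule.subset_span ⟨a, ab, b, s, bs, hab, hbs, rfl⟩)

theorem mk_tmul_eq_mk_mul_tmul (he : IsIdempotentElem e) {S : Submodule k A}
    (hS : S ≤ cornerSub k A e) (u : S) (hu : ∀ s : S, (s : A) * u = s)
    (a : aeSub k A e) (s : S) :
    (Submodule.Quotient.mk (a ⊗ₜ[k] s) : Glob k A e S) =
      Submodule.Quotient.mk
        ((⟨a * s, mul_mem_aeSub _ (he.cornerSub_le_aeSub (hS s.2))⟩ : aeSub k A e) ⊗ₜ[k] u) :=
  (mk_mul_tmul a _ ⟨s, hS s.2⟩ u s rfl (hu s).symm).symm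

theorem exists_eq_mk_tmul (he : IsIdempotentElem e) {S : Submodule k A}
    (hS : S ≤ cornerSub k A e) (u : S) (hu : ∀ s : S, (s : A) * u = s)
    (μ : Glob k A e S →ₗ[k] A)
    (hμ : ∀ (a : aeSub k A e) (s : S), μ (Submodule.Quotient.mk (a ⊗ₜ[k] s)) = a * s)
    (w : Glob k A e S) :
    ∃ x : aeSub k A e, (x : A) = μ w ∧ w = Submodule.Quotient.mk (x ⊗ₜ[k] u) := by
  obtain ⟨t, rfl⟩ := Submodule.Quotient.mk_surjective _ w
  induction t using TensorProduct.induction_on with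
  | zero => exact ⟨0, by simp, by simp⟩
  | tmul a s => exact ⟨_, (hμ a s).symm, mk_tmul_eq_mk_mul_tmul he hS u hu a s⟩
  | add t₁ t₂ ih₁ ih₂ =>
    obtain ⟨x₁, hμx₁, hx₁⟩ := ih₁
    obtain ⟨x₂, hμx₂, hx₂⟩ := ih₂
    refine ⟨x₁ + x₂, ?_, ?_⟩
    · rw [Submodule.Quotient.mk_add, map_add, ← hμx₁, ← hμx₂, Submodule.coe_add]
    · rw [Submodule.Quotient.mk_add, hx₁, hx₂, add_tmul, Submodule.Quotient.mk_add]

theorem injective_of_rightUnit (he : IsIdempotentElem e) {S : Submodule k A}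
    (hS : S ≤ cornerSub k A e) (u : S) (hu : ∀ s : S, (s : A) * u = s)
    (μ : Glob k A e S →ₗ[k] A)
    (hμ : ∀ (a : aeSub k A e) (s : S), μ (Submodule.Quotient.mk (a ⊗ₜ[k] s)) = a * s) :
    Function.Injective μ := by
  intro w₁ w₂ h
  obtain ⟨x₁, hμx₁, hx₁⟩ := exists_eq_mk_tmul he hS u hu μ hμ w₁
  obtain ⟨x₂, hμx₂, hx₂⟩ := exists_eq_mk_tmul he hS u hu μ hμ w₂
  rw [hx₁, hx₂, Subtype.ext (hμx₁.trans (h.trans hμx₂.symm))]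

theorem apply_mk_map_lmulAe {S : Submodule k A} (μ : Glob k A e S →ₗ[k] A)
    (hμ : ∀ (a : aeSub k A e) (s : S), μ (Submodule.Quotient.mk (a ⊗ₜ[k] s)) = a * s)
    (a' : A) (t : aeSub k A e ⊗[k] S) :
    μ (Submodule.Quotient.mk (map (lmulAe k A e a') LinearMap.id t)) =
      a' * μ (Submodule.Quotient.mk t) := by
  induction t using TensorProduct.induction_on with
  | zero => simp
  | tmul a s =>
    rw [map_tmul, LinearMap.id_apply, hμ, hμ, ← mul_assoc]
    rfl
  | add t₁ t₂ ih₁ ih₂ =>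
    rw [map_add, Submodule.Quotient.mk_add, map_add, ih₁, ih₂, Submodule.Quotient.mk_add,
      map_add, mul_add]

end Glob

section ReturnCondition

variable {f g : A}

theorem map_mulRight_cornerSub_le (he : IsIdempotentElem e) (hf : f ∈ cornerSub k A e) :
    (cornerSub k A e).map (LinearMap.mulRight k f) ≤ cornerSub k A e := by
  rintro _ ⟨b, hb, rfl⟩
  exact he.mul_mem_cornerSub hb hf

theorem mul_mul_mul_eq_of_mul_mul_eq (hret : f * g * f = f) (b : A) :
    b * f * (g * f) = b * f := by
  rw [mul_assoc, ← mul_assoc f, hret]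

theorem mul_mul_eq_self_of_mem_map_mulRight (hret : f * g * f = f) {s : A}
    (hs : s ∈ (cornerSub k A e).map (LinearMap.mulRight k f)) : s * (g * f) = s := by
  obtain ⟨b, -, rfl⟩ := hs
  exact mul_mul_mul_eq_of_mul_mul_eq hret b

theorem Glob.range_eq_map_mulRight (he : IsIdempotentElem e) (hf : f ∈ cornerSub k A e)
    (hg : g ∈ cornerSub k A e) (hret : f * g * f = f)
    (μ : Glob k A e ((cornerSub k A e).map (LinearMap.mulRight k f)) →ₗ[k] A)
    (hμ : ∀ (a : aeSub k A e) (s : (cornerSub k A e).map (LinearMap.mulRight k f)),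
      μ (Submodule.Quotient.mk (a ⊗ₜ[k] s)) = a * s) :
    LinearMap.range μ = (⊤ : Submodule k A).map (LinearMap.mulRight k f) := by
  let u : (cornerSub k A e).map (LinearMap.mulRight k f) := ⟨g * f, g, hg, rfl⟩
  have hu : ∀ s : (cornerSub k A e).map (LinearMap.mulRight k f), (s : A) * u = s :=
    fun s => mul_mul_eq_self_of_mem_map_mulRight hret s.2
  ext y
  constructor
  · rintro ⟨w, rfl⟩
    obtain ⟨x, hμx, hx⟩ := exists_eq_mk_tmul he (map_mulRight_cornerSub_le he hf) u hu μ hμ w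
    have hxu : (x : A) * u = x := by rw [← hμ, ← hx, hμx]
    refine ⟨x * g, trivial, ?_⟩
    rw [LinearMap.mulRight_apply, mul_assoc, ← hμx]
    exact hxu
  · rintro ⟨a, -, rfl⟩
    have haf : a * f ∈ aeSub k A e := mul_mem_aeSub a (he.cornerSub_le_aeSub hf)
    refine ⟨Submodule.Quotient.mk ((⟨a * f, haf⟩ : aeSub k A e) ⊗ₜ[k] u), ?_⟩
    rw [hμ]
    exact mul_mul_mul_eq_of_mul_mul_eq hret a

end ReturnCondition

end Globalisation

theorem stmt2 (k A : Type) [Field k] [Ring A] [Algebra k A]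
    (e f g : A) (he : IsIdempotentElem e)
    (hf : f ∈ cornerSub k A e) (hg : g ∈ cornerSub k A e)
    (hret : f * g * f = f)
    -- `S = eAe f` :
    (S : Submodule k A)
    (hS : S = Submodule.map (LinearMap.mulRight k f) (cornerSub k A e))
    -- `μ` is the multiplication map `G(S) → A`, `a ⊗ s ↦ a s` :
    (μ : Glob k A e S →ₗ[k] A)
    (hμ : ∀ (a : aeSub k A e) (s : S),
      μ (Submodule.Quotient.mk (a ⊗ₜ[k] s)) = (a : A) * (s : A)) :
    -- μ is injective,
    Function.Injective μ ∧
    -- with image the left ideal `Af`,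
    LinearMap.range μ = Submodule.map (LinearMap.mulRight k f) (⊤ : Submodule k A) ∧
    -- μ is a morphism of left A-modules,
    (∀ (a' : A) (t : aeSub k A e ⊗[k] S),
      μ (Submodule.Quotient.mk (TensorProduct.map (lmulAe k A e a') LinearMap.id t))
        = a' * μ (Submodule.Quotient.mk t)) ∧
    -- and its inverse is given explicitly by `ν (x) = x ⊗ g f` :
    (∀ w : Glob k A e S, ∃ (x : aeSub k A e) (s : S),
      (s : A) = g * f ∧ (x : A) = μ w ∧ w = Submodule.Quotient.mk (x ⊗ₜ[k] s)) := by
  subst hS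
  have hS_le := map_mulRight_cornerSub_le he hf
  let u : (cornerSub k A e).map (LinearMap.mulRight k f) := ⟨g * f, g, hg, rfl⟩
  have hu : ∀ s : (cornerSub k A e).map (LinearMap.mulRight k f), (s : A) * u = s :=
    fun s => mul_mul_eq_self_of_mem_map_mulRight hret s.2
  refine ⟨Glob.injective_of_rightUnit he hS_le u hu μ hμ,
    Glob.range_eq_map_mulRight he hf hg hret μ hμ, Glob.apply_mk_map_lmulAe μ hμ, fun w => ?_⟩
  obtain ⟨x, hμx, hx⟩ := Glob.exists_eq_mk_tmul he hS_le u hu μ hμ w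
  exact ⟨x, u, rfl, hμx, hx⟩
end

section
/- The map u_i ↦ U_i (for i ≥ 1) and u₀ ↦ e extends to an algebra homomorphism from the quotient T(B_n) of the type-B Hecke algebra to the blob algebra TLb_n, when the parameters satisfy q = q₁, δ_e = q₀ + q₀⁻¹, and γ = (q₀² + q²)/(q₀q). -/
/-!
STATEMENT 8.
The map `uᵢ ↦ Uᵢ` (`i ≥ 1`), `u₀ ↦ e` extends to an algebra homomorphism from the quotient
`T(Bₙ)` of the type-`B` Hecke algebra to the blob algebra `TLbₙ` when `q = q₁`,
`δₑ = q₀ + q₀⁻¹` and `γ = (q₀² + q²)/(q₀ q)`.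

By the universal property of the presented algebra `T(Bₙ)`, this is equivalent to the
following statement: in any algebra `A` containing elements `U₁, …, U_{n−1}, e`
satisfying the defining relations of `TLbₙ` (with the parameter specialisation above),
the elements `g₀ := e − q₀⁻¹` and `gᵢ := Uᵢ − q⁻¹` (so that `uᵥ = gᵥ + qᵥ⁻¹` maps to the
corresponding generator) satisfy all the defining relations of `T(Bₙ)`: the quadratic
Hecke relations, the commutation and braid relations of the Coxeter graph `Bₙ`, and the
vanishing of the parabolic symmetrizers `E_{v,v'}` for adjacent vertices
(of types `A₂` and `B₂`).
-/

section Aux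

variable {K A : Type} [CommRing K] [Ring A] [Algebra K A]

private lemma aux_quad (Q c : K) (x : A) (hx : x * x = (Q + c) • x) :
    (x - algebraMap K A c - algebraMap K A Q) * (x - algebraMap K A c + algebraMap K A c) = 0 := by
  rw [sub_add_cancel]
  simp only [Algebra.algebraMap_eq_smul_one, sub_mul, smul_mul_assoc, one_mul, hx]
  module

private lemma aux_comm (c c' : K) (x y : A) (h : x * y = y * x) :
    (x - algebraMap K A c) * (y - algebraMap K A c')
      = (y - algebraMap K A c') * (x - algebraMap K A c) := by
  simp only [Algebra.algebraMap_eq_smul_one, sub_mul, mul_sub, smul_mul_assoc, mul_smul_comm,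
    one_mul, mul_one, h, smul_smul]
  module

private lemma aux_braidA2 (Q c : K) (hqc : Q * c = 1) (x y : A)
    (hx : x * x = (Q + c) • x) (hy : y * y = (Q + c) • y)
    (hxyx : x * y * x = x) (hyxy : y * x * y = y) :
    (x - algebraMap K A c) * (y - algebraMap K A c) * (x - algebraMap K A c)
      = (y - algebraMap K A c) * (x - algebraMap K A c) * (y - algebraMap K A c) := by
  have hx2 : ∀ z : A, x * (x * z) = (Q + c) • (x * z) := fun z => by
    rw [← mul_assoc, hx, smul_mul_assoc]
  have hy2 : ∀ z : A, y * (y * z) = (Q + c) • (y * z) := fun z => by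
    rw [← mul_assoc, hy, smul_mul_assoc]
  have hxyx1 : x * (y * x) = x := by rw [← mul_assoc, hxyx]
  have hyxy1 : y * (x * y) = y := by rw [← mul_assoc, hyxy]
  have hxyx2 : ∀ z : A, x * (y * (x * z)) = x * z := fun z => by
    rw [← mul_assoc y, ← mul_assoc, ← mul_assoc, hxyx]
  have hyxy2 : ∀ z : A, y * (x * (y * z)) = y * z := fun z => by
    rw [← mul_assoc x, ← mul_assoc, ← mul_assoc, hyxy]
  simp only [Algebra.algebraMap_eq_smul_one, sub_mul, mul_sub, add_mul, mul_add,
    smul_mul_assoc, mul_smul_comm, one_mul, mul_one, smul_smul, smul_sub, smul_add,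
    mul_assoc, hx, hy, hx2, hy2, hxyx1, hyxy1, hxyx2, hyxy2]
  match_scalars <;>
    first
      | ring1
      | linear_combination hqc
      | linear_combination (-1 : K) * hqc

private lemma aux_symA2 (Q c : K) (hqc : Q * c = 1) (x y : A)
    (hx : x * x = (Q + c) • x) (hy : y * y = (Q + c) • y)
    (hxyx : x * y * x = x) (hyxy : y * x * y = y) :
    (1 : A) + Q • ((x - algebraMap K A c) + (y - algebraMap K A c))
      + Q ^ 2 • ((x - algebraMap K A c) * (y - algebraMap K A c)
          + (y - algebraMap K A c) * (x - algebraMap K A c))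
      + Q ^ 3 • ((x - algebraMap K A c) * (y - algebraMap K A c) * (x - algebraMap K A c))
      = 0 := by
  have hx2 : ∀ z : A, x * (x * z) = (Q + c) • (x * z) := fun z => by
    rw [← mul_assoc, hx, smul_mul_assoc]
  have hy2 : ∀ z : A, y * (y * z) = (Q + c) • (y * z) := fun z => by
    rw [← mul_assoc, hy, smul_mul_assoc]
  have hxyx1 : x * (y * x) = x := by rw [← mul_assoc, hxyx]
  have hyxy1 : y * (x * y) = y := by rw [← mul_assoc, hyxy]
  have hxyx2 : ∀ z : A, x * (y * (x * z)) = x * z := fun z => by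
    rw [← mul_assoc y, ← mul_assoc, ← mul_assoc, hxyx]
  have hyxy2 : ∀ z : A, y * (x * (y * z)) = y * z := fun z => by
    rw [← mul_assoc x, ← mul_assoc, ← mul_assoc, hyxy]
  simp only [Algebra.algebraMap_eq_smul_one, sub_mul, mul_sub, add_mul, mul_add,
    smul_mul_assoc, mul_smul_comm, one_mul, mul_one, smul_smul, smul_sub, smul_add,
    mul_assoc, hx, hy, hx2, hy2, hxyx1, hyxy1, hxyx2, hyxy2]
  match_scalars <;>
    first
      | ring1
      | linear_combination (- Q + Q ^ 2 * c - Q ^ 3) * hqc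
      | linear_combination (- Q + Q ^ 2 * c) * hqc
      | linear_combination (- Q ^ 2) * hqc
      | linear_combination (- 1 + Q * c - Q ^ 2 * c ^ 2) * hqc

private lemma aux_braidB2 (Q c q0 c0 : K) (hqc : Q * c = 1) (hq0c0 : q0 * c0 = 1) (a b : A)
    (ha : a * a = (q0 + c0) • a) (hb : b * b = (Q + c) • b)
    (hbab : b * a * b = ((q0 ^ 2 + Q ^ 2) * (c0 * c)) • b) :
    (a - algebraMap K A c0) * (b - algebraMap K A c) * (a - algebraMap K A c0)
        * (b - algebraMap K A c)
      = (b - algebraMap K A c) * (a - algebraMap K A c0) * (b - algebraMap K A c)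
        * (a - algebraMap K A c0) := by
  have ha2 : ∀ z : A, a * (a * z) = (q0 + c0) • (a * z) := fun z => by
    rw [← mul_assoc, ha, smul_mul_assoc]
  have hb2 : ∀ z : A, b * (b * z) = (Q + c) • (b * z) := fun z => by
    rw [← mul_assoc, hb, smul_mul_assoc]
  have hbab1 : b * (a * b) = ((q0 ^ 2 + Q ^ 2) * (c0 * c)) • b := by rw [← mul_assoc, hbab]
  have hbab2 : ∀ z : A, b * (a * (b * z)) = ((q0 ^ 2 + Q ^ 2) * (c0 * c)) • (b * z) := fun z => by
    rw [← mul_assoc a, ← mul_assoc, ← mul_assoc, hbab, smul_mul_assoc]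
  simp only [Algebra.algebraMap_eq_smul_one, sub_mul, mul_sub, add_mul, mul_add,
    smul_mul_assoc, mul_smul_comm, one_mul, mul_one, smul_smul, smul_sub, smul_add,
    mul_assoc, ha, hb, ha2, hb2, hbab1, hbab2]
  match_scalars <;>
    first
      | ring1
      | linear_combination (- (c * q0)) * hq0c0 + (- (c0 * Q)) * hqc
      | linear_combination (- (c0 * Q)) * hqc + (- (c * q0)) * hq0c0
      | linear_combination (Q * c0) * hqc + (c * q0) * hq0c0

private lemma aux_symB2 (Q c q0 c0 : K) (hqc : Q * c = 1) (hq0c0 : q0 * c0 = 1) (a b : A)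
    (ha : a * a = (q0 + c0) • a) (hb : b * b = (Q + c) • b)
    (hbab : b * a * b = ((q0 ^ 2 + Q ^ 2) * (c0 * c)) • b) :
    (1 : A) + Q • (b - algebraMap K A c) + q0 • (a - algebraMap K A c0)
      + (q0 * Q) • ((a - algebraMap K A c0) * (b - algebraMap K A c)
          + (b - algebraMap K A c) * (a - algebraMap K A c0))
      + (q0 * Q * q0) • ((a - algebraMap K A c0) * (b - algebraMap K A c)
          * (a - algebraMap K A c0))
      + (q0 * Q * Q) • ((b - algebraMap K A c) * (a - algebraMap K A c0)
          * (b - algebraMap K A c))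
      + ((q0 * Q) ^ 2) • ((a - algebraMap K A c0) * (b - algebraMap K A c)
          * (a - algebraMap K A c0) * (b - algebraMap K A c)) = 0 := by
  have ha2 : ∀ z : A, a * (a * z) = (q0 + c0) • (a * z) := fun z => by
    rw [← mul_assoc, ha, smul_mul_assoc]
  have hb2 : ∀ z : A, b * (b * z) = (Q + c) • (b * z) := fun z => by
    rw [← mul_assoc, hb, smul_mul_assoc]
  have hbab1 : b * (a * b) = ((q0 ^ 2 + Q ^ 2) * (c0 * c)) • b := by rw [← mul_assoc, hbab]
  have hbab2 : ∀ z : A, b * (a * (b * z)) = ((q0 ^ 2 + Q ^ 2) * (c0 * c)) • (b * z) := fun z => by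
    rw [← mul_assoc a, ← mul_assoc, ← mul_assoc, hbab, smul_mul_assoc]
  simp only [Algebra.algebraMap_eq_smul_one, sub_mul, mul_sub, add_mul, mul_add,
    smul_mul_assoc, mul_smul_comm, one_mul, mul_one, smul_smul, smul_sub, smul_add,
    mul_assoc, ha, hb, ha2, hb2, hbab1, hbab2]
  match_scalars <;>
    first
      | ring1
      | linear_combination
          (Q * q0 * c0 - Q * q0 ^ 2 * c0 ^ 2 + Q * q0 ^ 3 * c0 - Q * q0 ^ 4 * c0 ^ 2
            + Q ^ 3 * q0 * c0 - Q ^ 3 * q0 ^ 2 * c0 ^ 2) * hqc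
          + (- Q - Q * q0 ^ 3 * c0) * hq0c0
      | linear_combination (- q0 + Q * c * q0 - Q * c * q0 ^ 2 * c0 + Q * c * q0 ^ 3) * hqc
      | linear_combination
          (- (Q * q0) + Q * q0 ^ 2 * c0 - Q * q0 ^ 3 + Q * q0 ^ 4 * c0 + Q ^ 3 * q0 ^ 2 * c0) * hqc
          + (Q * q0 ^ 3) * hq0c0
      | linear_combination (- (Q * q0) + Q * q0 ^ 2 * c0) * hqc
      | linear_combination (- (Q * q0 ^ 2)) * hqc
      | linear_combination (- 1 + q0 * c0 - Q * c * q0 * c0 + Q * c * q0 ^ 2 * c0 ^ 2) * hqc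

end Aux

theorem stmt8 (K A : Type) [CommRing K] [Ring A] [Algebra K A] (n : ℕ) (hn : 2 ≤ n)
    (q q0 : Kˣ) (U : ℕ → A) (e : A)
    -- the defining relations of TLb_n with δₑ = q₀ + q₀⁻¹ and γ = (q₀² + q²)/(q₀q) :
    (hUsq : ∀ i, 1 ≤ i → i ≤ n - 1 → U i * U i = ((q : K) + ((q⁻¹ : Kˣ) : K)) • U i)
    (hUbr : ∀ i, 1 ≤ i → i + 1 ≤ n - 1 →
      U i * U (i + 1) * U i = U i ∧ U (i + 1) * U i * U (i + 1) = U (i + 1))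
    (hUcomm : ∀ i j, 1 ≤ i → j ≤ n - 1 → i + 2 ≤ j → U i * U j = U j * U i)
    (hU1e : U 1 * e * U 1
      = ((((q0 : K) ^ 2 + (q : K) ^ 2) * (((q0 * q)⁻¹ : Kˣ) : K))) • U 1)
    (hee : e * e = ((q0 : K) + ((q0⁻¹ : Kˣ) : K)) • e)
    (hecomm : ∀ i, 2 ≤ i → i ≤ n - 1 → U i * e = e * U i) :
    ∀ g : ℕ → A,
      g 0 = e - algebraMap K A ((q0⁻¹ : Kˣ) : K) →
      (∀ i, 1 ≤ i → g i = U i - algebraMap K A ((q⁻¹ : Kˣ) : K)) →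
      -- quadratic relations:
      ((g 0 - algebraMap K A (q0 : K)) * (g 0 + algebraMap K A ((q0⁻¹ : Kˣ) : K)) = 0)
      ∧ (∀ i, 1 ≤ i → i ≤ n - 1 →
          (g i - algebraMap K A (q : K)) * (g i + algebraMap K A ((q⁻¹ : Kˣ) : K)) = 0)
      -- commutation relations for non-adjacent vertices:
      ∧ (∀ i j, 1 ≤ i → j ≤ n - 1 → i + 2 ≤ j → g i * g j = g j * g i)
      ∧ (∀ j, 2 ≤ j → j ≤ n - 1 → g 0 * g j = g j * g 0)
      -- braid relations:
      ∧ (∀ i, 1 ≤ i → i + 1 ≤ n - 1 →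
          g i * g (i + 1) * g i = g (i + 1) * g i * g (i + 1))
      ∧ (g 0 * g 1 * g 0 * g 1 = g 1 * g 0 * g 1 * g 0)
      -- vanishing of the A₂-type parabolic symmetrizers E_{i,i+1}, i ≥ 1:
      ∧ (∀ i, 1 ≤ i → i + 1 ≤ n - 1 →
          (1 : A) + (q : K) • (g i + g (i + 1))
            + ((q : K) ^ 2) • (g i * g (i + 1) + g (i + 1) * g i)
            + ((q : K) ^ 3) • (g i * g (i + 1) * g i) = 0)
      -- vanishing of the B₂-type parabolic symmetrizer E_{0,1}:
      ∧ ((1 : A) + (q : K) • g 1 + (q0 : K) • g 0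
            + ((q0 : K) * (q : K)) • (g 0 * g 1 + g 1 * g 0)
            + ((q0 : K) * (q : K) * (q0 : K)) • (g 0 * g 1 * g 0)
            + ((q0 : K) * (q : K) * (q : K)) • (g 1 * g 0 * g 1)
            + (((q0 : K) * (q : K)) ^ 2) • (g 0 * g 1 * g 0 * g 1) = 0) := by
  intro g hg0 hg1
  have hqc : (q : K) * ((q⁻¹ : Kˣ) : K) = 1 := q.mul_inv
  have hq0c0 : (q0 : K) * ((q0⁻¹ : Kˣ) : K) = 1 := q0.mul_inv
  have h1n : 1 ≤ n - 1 := by omega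
  have hbab : U 1 * e * U 1
      = (((q0 : K) ^ 2 + (q : K) ^ 2) * (((q0⁻¹ : Kˣ) : K) * ((q⁻¹ : Kˣ) : K))) • U 1 := by
    have hcoe : (((q0 * q)⁻¹ : Kˣ) : K) = ((q0⁻¹ : Kˣ) : K) * ((q⁻¹ : Kˣ) : K) := by
      rw [mul_inv_rev, Units.val_mul]; ring
    rw [hU1e, hcoe]
  refine ⟨?_, ?_, ?_, ?_, ?_, ?_, ?_, ?_⟩
  · rw [hg0]; exact aux_quad _ _ _ hee
  · intro i h1 h2; rw [hg1 i h1]; exact aux_quad _ _ _ (hUsq i h1 h2)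
  · intro i j h1 h2 h3; rw [hg1 i h1, hg1 j (by omega)]
    exact aux_comm _ _ _ _ (hUcomm i j h1 h2 h3)
  · intro j h2 hj; rw [hg0, hg1 j (by omega)]
    exact aux_comm _ _ _ _ (hecomm j h2 hj).symm
  · intro i h1 h2; rw [hg1 i h1, hg1 (i + 1) (by omega)]
    exact aux_braidA2 _ _ hqc _ _ (hUsq i h1 (by omega)) (hUsq (i + 1) (by omega) h2)
      (hUbr i h1 h2).1 (hUbr i h1 h2).2
  · rw [hg0, hg1 1 le_rfl]
    exact aux_braidB2 _ _ _ _ hqc hq0c0 e (U 1) hee (hUsq 1 le_rfl h1n) hbab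
  · intro i h1 h2; rw [hg1 i h1, hg1 (i + 1) (by omega)]
    exact aux_symA2 _ _ hqc _ _ (hUsq i h1 (by omega)) (hUsq (i + 1) (by omega) h2)
      (hUbr i h1 h2).1 (hUbr i h1 h2).2
  · rw [hg0, hg1 1 le_rfl]
    exact aux_symB2 _ _ _ _ hqc hq0c0 e (U 1) hee (hUsq 1 le_rfl h1n) hbab
end
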